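/- arXiv:2209.09150 — 2 statements merged into one kernel-verified Lean document; each statement's English description precedes it below -/
import Mathlib

section
/- Let n > 3. The Lie algebra of derivations of the Poisson algebra P₁,₅ⁿ has dimension n. Moreover, a linear map φ is a derivation of P₁,₅ⁿ if and only if there exist λ₂,…,λₙ, μ ∈ ℂ such that φ(e₁) = Σ_{k=2}^{n} λ_k e_k, φ(e_i) = i·Σ_{k=i+1}^{n−1} λ_{k−i+1} e_k for 2 ≤ i ≤ n−1, and φ(eₙ) = −λₙ e_{n−2} + μ e_{n−1}. -/
open scoped BigOperators

/-- The bilinear map on `Fin n → ℂ` determined by structure constants `c`. -/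
noncomputable def sb {n : ℕ} (c : Fin n → Fin n → Fin n → ℂ) :
    (Fin n → ℂ) →ₗ[ℂ] (Fin n → ℂ) →ₗ[ℂ] (Fin n → ℂ) :=
  LinearMap.mk₂ ℂ (fun x y k => ∑ a, ∑ b, c a b k * (x a * y b))
    (fun x x' y => by
      funext k
      simp [add_mul, mul_add, Finset.sum_add_distrib])
    (fun r x y => by
      funext k
      simp only [Pi.smul_apply, smul_eq_mul, Finset.mul_sum]
      exact Finset.sum_congr rfl fun a _ => Finset.sum_congr rfl fun b _ => by ring)
    (fun x y y' => by
      funext k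
      simp [mul_add, Finset.sum_add_distrib])
    (fun r x y => by
      funext k
      simp only [Pi.smul_apply, smul_eq_mul, Finset.mul_sum]
      exact Finset.sum_congr rfl fun a _ => Finset.sum_congr rfl fun b _ => by ring)

/-- The Lie algebra (here: submodule) of derivations of the Poisson algebra on
`Fin n → ℂ` with multiplication `m` and bracket `b`. -/
noncomputable def derivs {n : ℕ}
    (m b : (Fin n → ℂ) →ₗ[ℂ] (Fin n → ℂ) →ₗ[ℂ] (Fin n → ℂ)) :
    Submodule ℂ ((Fin n → ℂ) →ₗ[ℂ] (Fin n → ℂ)) where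
  carrier := {φ | (∀ x y, φ (m x y) = m (φ x) y + m x (φ y)) ∧
      (∀ x y, φ (b x y) = b (φ x) y + b x (φ y))}
  add_mem' := by
    rintro φ ψ ⟨h1, h2⟩ ⟨g1, g2⟩
    refine ⟨fun x y => ?_, fun x y => ?_⟩ <;>
      simp only [LinearMap.add_apply, map_add, h1, h2, g1, g2] <;> abel
  zero_mem' := by
    refine ⟨fun x y => ?_, fun x y => ?_⟩ <;> simp
  smul_mem' := by
    rintro r φ ⟨h1, h2⟩
    refine ⟨fun x y => ?_, fun x y => ?_⟩ <;>
      simp only [LinearMap.smul_apply, map_smul, h1, h2, smul_add]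

/-- Multiplication of `P₁,₅ⁿ`: `e_i · e_j = e_{i+j}` for `2 ≤ i+j ≤ n−1`,
`i,j ≤ n−1`, together with `eₙ·eₙ = e_{n−1}`. -/
noncomputable def mu12 (n : ℕ) : (Fin n → ℂ) →ₗ[ℂ] (Fin n → ℂ) →ₗ[ℂ] (Fin n → ℂ) :=
  sb (fun a b k =>
    (if (a : ℕ) + (b : ℕ) + 1 = (k : ℕ) ∧ (k : ℕ) + 2 ≤ n then 1 else 0) +
    (if (a : ℕ) + 1 = n ∧ (b : ℕ) + 1 = n ∧ (k : ℕ) + 2 = n then 1 else 0))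

/-- The bracket of `P₁,₅ⁿ`: `{e₁,eₙ} = e_{n−1}`. -/
noncomputable def brB (n : ℕ) : (Fin n → ℂ) →ₗ[ℂ] (Fin n → ℂ) →ₗ[ℂ] (Fin n → ℂ) :=
  sb (fun a b k =>
    if (a : ℕ) = 0 ∧ (b : ℕ) + 1 = n ∧ (k : ℕ) + 2 = n then 1
    else if (a : ℕ) + 1 = n ∧ (b : ℕ) = 0 ∧ (k : ℕ) + 2 = n then -1 else 0)

/-! Write `d i k` for the coefficient of `e_k` in `φ e_i`. On pairs of basis vectors the two
Leibniz rules become linear relations among the `d i k`. Those for `e₁ · e_i = e_{i+1}` express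
the rows `1 < i < n` through the first one, as for the derivation `p(x) d/dx` of `x ℂ[x] / (xⁿ)`
under `e_i ↦ xⁱ`, and those for `e₁ · eₙ = 0` give `d n k = 0` for `k < n - 2` and
`d n (n-2) = -d 1 n`. Comparing `eₙ · eₙ = e_{n-1}` with `{e₁, eₙ} = e_{n-1}` gives `d n n = d 1 1`
and `(n - 3) d 1 1 = 0`: this is where `n > 3` enters. Conversely the resulting matrix is the sum
of `p(x) d/dx`, a multiple of `e₁ ↦ eₙ, eₙ ↦ -e_{n-2}` and a multiple of `{e₁, -}`, each of which
satisfies the relations. The free entries `d 1 k` (`k ≥ 2`) and `d n (n-1)` are `n` linear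
coordinates on the space of derivations. -/

section Leibniz

variable {R M ι : Type*} [CommSemiring R] [AddCommMonoid M] [Module R M]

def IsDerivationOf (B : M →ₗ[R] M →ₗ[R] M) (φ : M →ₗ[R] M) : Prop :=
  ∀ x y, φ (B x y) = B (φ x) y + B x (φ y)

theorem isDerivationOf_iff_basis (b : Module.Basis ι R M) (B : M →ₗ[R] M →ₗ[R] M)
    (φ : M →ₗ[R] M) :
    IsDerivationOf B φ ↔
      ∀ i j, φ (B (b i) (b j)) = B (φ (b i)) (b j) + B (b i) (φ (b j)) := by
  refine ⟨fun h i j => h _ _, fun h x y => ?_⟩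
  have hB : B.compr₂ φ = B.comp φ + B.compl₂ φ :=
    LinearMap.ext_basis b b fun i j => by simpa using h i j
  simpa using LinearMap.congr_fun₂ hB x y

end Leibniz

section StructureConstants

variable {n : ℕ} (c : Fin n → Fin n → Fin n → ℂ)

theorem sb_single_left (a : Fin n) (y : Fin n → ℂ) (k : Fin n) :
    sb c (Pi.single a 1) y k = ∑ b, c a b k * y b := by
  simp [sb, Pi.single_apply]

theorem sb_single_right (x : Fin n → ℂ) (b k : Fin n) :
    sb c x (Pi.single b 1) k = ∑ a, c a b k * x a := by
  simp [sb, Pi.single_apply]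

theorem isDerivationOf_sb_iff (φ : (Fin n → ℂ) →ₗ[ℂ] (Fin n → ℂ)) :
    IsDerivationOf (sb c) φ ↔ ∀ a b k : Fin n,
      ∑ m, c a b m * φ (Pi.single m 1) k =
        ∑ i, c i b k * φ (Pi.single a 1) i + ∑ i, c a i k * φ (Pi.single b 1) i := by
  rw [isDerivationOf_iff_basis (Pi.basisFun ℂ (Fin n))]
  refine forall₂_congr fun a b => ?_
  rw [funext_iff]
  refine forall_congr' fun k => ?_
  have hvec : sb c (Pi.single a 1) (Pi.single b 1) = ∑ m, c a b m • Pi.single m 1 := by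
    ext k
    simp [sb_single_left, Pi.single_apply]
  simp [hvec, sb_single_left, sb_single_right]

end StructureConstants

theorem sum_ite_val_eq {M : Type*} [AddCommMonoid M] {n : ℕ} {P : Fin n → Prop}
    [DecidablePred P] {Q : Prop} [Decidable Q] (t : ℕ) (ht : Q → t < n)
    (hP : ∀ m : Fin n, P m ↔ (m : ℕ) = t ∧ Q) (f : ℕ → M) :
    ∑ m : Fin n, (if P m then f m else 0) = if Q then f t else 0 := by
  split_ifs with hQ
  · rw [Finset.sum_eq_single_of_mem ⟨t, ht hQ⟩ (Finset.mem_univ _)]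
    · simp [hP, hQ]
    · exact fun m _ hm => if_neg fun h => hm (Fin.ext ((hP m).1 h).1)
  · exact Finset.sum_eq_zero fun m _ => if_neg fun h => hQ ((hP m).1 h).2

namespace P15

variable {n : ℕ}

/-- The matrix entries of `φ`, indexed from `0`: the paper's `e_{i+1}` is `Pi.single i 1`.
Out of range they are `0`. -/
def coeff (φ : (Fin n → ℂ) →ₗ[ℂ] (Fin n → ℂ)) (a k : ℕ) : ℂ :=
  if h : a < n ∧ k < n then φ (Pi.single ⟨a, h.1⟩ 1) ⟨k, h.2⟩ else 0

@[simp]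
theorem coeff_val (φ : (Fin n → ℂ) →ₗ[ℂ] (Fin n → ℂ)) (a k : Fin n) :
    coeff φ a k = φ (Pi.single a 1) k := by
  simp [coeff]

/-- The coefficient of `Pi.single k 1` in `φ (e_a · e_b) = φ e_a · e_b + e_a · φ e_b`, for
`e_i = Pi.single i 1` and `d i j` the coefficient of `e_j` in `φ e_i`. -/
def MulRel (n : ℕ) (d : ℕ → ℕ → ℂ) (a b k : ℕ) : Prop :=
  (if a + b + 3 ≤ n then d (a + b + 1) k else 0) +
      (if a + 1 = n ∧ b + 1 = n then d (n - 2) k else 0) =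
    (if b + 1 ≤ k ∧ k + 2 ≤ n then d a (k - b - 1) else 0) +
      (if b + 1 = n ∧ k + 2 = n then d a (n - 1) else 0) +
    ((if a + 1 ≤ k ∧ k + 2 ≤ n then d b (k - a - 1) else 0) +
      (if a + 1 = n ∧ k + 2 = n then d b (n - 1) else 0))

/-- The same as `MulRel` for the bracket. -/
def BrRel (n : ℕ) (d : ℕ → ℕ → ℂ) (a b k : ℕ) : Prop :=
  (if a = 0 ∧ b + 1 = n then d (n - 2) k else 0) -
      (if a + 1 = n ∧ b = 0 then d (n - 2) k else 0) =
    (if b + 1 = n ∧ k + 2 = n then d a 0 else 0) -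
      (if b = 0 ∧ k + 2 = n then d a (n - 1) else 0) +
    ((if a = 0 ∧ k + 2 = n then d b (n - 1) else 0) -
      (if a + 1 = n ∧ k + 2 = n then d b 0 else 0))

theorem isDerivationOf_mu12_iff (hn : 2 ≤ n) (φ : (Fin n → ℂ) →ₗ[ℂ] (Fin n → ℂ)) :
    IsDerivationOf (mu12 n) φ ↔ ∀ a b k : Fin n, MulRel n (coeff φ) a b k := by
  rw [mu12, isDerivationOf_sb_iff]
  refine forall₃_congr fun a b k => ?_
  have := k.isLt
  simp only [← coeff_val φ, add_mul, ite_mul, one_mul, zero_mul, Finset.sum_add_distrib]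
  rw [sum_ite_val_eq (a + b + 1 : ℕ) (Q := (a : ℕ) + b + 3 ≤ n) ?_ ?_
      (fun t => coeff φ t k),
    sum_ite_val_eq (n - 2) (Q := (a : ℕ) + 1 = n ∧ (b : ℕ) + 1 = n) ?_ ?_
      (fun t => coeff φ t k),
    sum_ite_val_eq (k - b - 1 : ℕ) (Q := (b : ℕ) + 1 ≤ k ∧ (k : ℕ) + 2 ≤ n) ?_
      ?_ (coeff φ a),
    sum_ite_val_eq (n - 1) (Q := (b : ℕ) + 1 = n ∧ (k : ℕ) + 2 = n) ?_ ?_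
      (coeff φ a),
    sum_ite_val_eq (k - a - 1 : ℕ) (Q := (a : ℕ) + 1 ≤ k ∧ (k : ℕ) + 2 ≤ n) ?_
      ?_ (coeff φ b),
    sum_ite_val_eq (n - 1) (Q := (a : ℕ) + 1 = n ∧ (k : ℕ) + 2 = n) ?_ ?_
      (coeff φ b)]
  · rfl
  all_goals omega

theorem brB_eq_sb_sub :
    brB n = sb fun a b k =>
      (if (a : ℕ) = 0 ∧ (b : ℕ) + 1 = n ∧ (k : ℕ) + 2 = n then 1 else 0) -
        (if (a : ℕ) + 1 = n ∧ (b : ℕ) = 0 ∧ (k : ℕ) + 2 = n then 1 else 0) := by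
  unfold brB
  congr
  funext a b k
  split_ifs <;> first | omega | norm_num

theorem isDerivationOf_brB_iff (hn : 2 ≤ n) (φ : (Fin n → ℂ) →ₗ[ℂ] (Fin n → ℂ)) :
    IsDerivationOf (brB n) φ ↔ ∀ a b k : Fin n, BrRel n (coeff φ) a b k := by
  rw [brB_eq_sb_sub, isDerivationOf_sb_iff]
  refine forall₃_congr fun a b k => ?_
  have := k.isLt
  simp only [← coeff_val φ, sub_mul, ite_mul, one_mul, zero_mul, Finset.sum_sub_distrib]
  rw [sum_ite_val_eq (n - 2) (Q := (a : ℕ) = 0 ∧ (b : ℕ) + 1 = n) ?_ ?_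
      (fun t => coeff φ t k),
    sum_ite_val_eq (n - 2) (Q := (a : ℕ) + 1 = n ∧ (b : ℕ) = 0) ?_ ?_
      (fun t => coeff φ t k),
    sum_ite_val_eq 0 (Q := (b : ℕ) + 1 = n ∧ (k : ℕ) + 2 = n) ?_ ?_ (coeff φ a),
    sum_ite_val_eq (n - 1) (Q := (b : ℕ) = 0 ∧ (k : ℕ) + 2 = n) ?_ ?_ (coeff φ a),
    sum_ite_val_eq (n - 1) (Q := (a : ℕ) = 0 ∧ (k : ℕ) + 2 = n) ?_ ?_ (coeff φ b),
    sum_ite_val_eq 0 (Q := (a : ℕ) + 1 = n ∧ (k : ℕ) + 2 = n) ?_ ?_ (coeff φ b)]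
  · rfl
  all_goals omega

theorem coeff_add (φ ψ : (Fin n → ℂ) →ₗ[ℂ] (Fin n → ℂ)) :
    coeff (φ + ψ) = coeff φ + coeff ψ := by
  funext a k
  by_cases h : a < n ∧ k < n <;> simp [coeff, h]

theorem coeff_smul (c : ℂ) (φ : (Fin n → ℂ) →ₗ[ℂ] (Fin n → ℂ)) :
    coeff (c • φ) = c • coeff φ := by
  funext a k
  by_cases h : a < n ∧ k < n <;> simp [coeff, h]

theorem coeff_eq_iff {φ : (Fin n → ℂ) →ₗ[ℂ] (Fin n → ℂ)} {d : ℕ → ℕ → ℂ}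
    (hd : ∀ a k, ¬(a < n ∧ k < n) → d a k = 0) :
    coeff φ = d ↔ ∀ a k : Fin n, φ (Pi.single a 1) k = d a k := by
  refine ⟨fun h a k => by rw [← coeff_val, h], fun h => funext₂ fun a k => ?_⟩
  by_cases hak : a < n ∧ k < n
  · exact (coeff_val φ ⟨a, hak.1⟩ ⟨k, hak.2⟩).trans (h _ _)
  · rw [coeff, dif_neg hak, hd a k hak]

theorem MulRel.add {d₁ d₂ : ℕ → ℕ → ℂ} {a b k : ℕ} (h₁ : MulRel n d₁ a b k)
    (h₂ : MulRel n d₂ a b k) : MulRel n (d₁ + d₂) a b k := by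
  unfold MulRel at *
  simp only [Pi.add_apply]
  split_ifs at * <;> linear_combination h₁ + h₂

theorem MulRel.smul {d : ℕ → ℕ → ℂ} {a b k : ℕ} (h : MulRel n d a b k) (c : ℂ) :
    MulRel n (c • d) a b k := by
  unfold MulRel at *
  simp only [Pi.smul_apply, smul_eq_mul]
  split_ifs at * <;> linear_combination c * h

theorem BrRel.add {d₁ d₂ : ℕ → ℕ → ℂ} {a b k : ℕ} (h₁ : BrRel n d₁ a b k)
    (h₂ : BrRel n d₂ a b k) : BrRel n (d₁ + d₂) a b k := by
  unfold BrRel at *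
  simp only [Pi.add_apply]
  split_ifs at * <;> linear_combination h₁ + h₂

theorem BrRel.smul {d : ℕ → ℕ → ℂ} {a b k : ℕ} (h : BrRel n d a b k) (c : ℂ) :
    BrRel n (c • d) a b k := by
  unfold BrRel at *
  simp only [Pi.smul_apply, smul_eq_mul]
  split_ifs at * <;> linear_combination c * h

/-- The derivation `(∑ⱼ lam j • xʲ) d/dx` of `x ℂ[x] / (xⁿ)`, transported along
`Pi.single i 1 ↦ xⁱ⁺¹` (`i ≤ n - 2`) and extended by `0` on the last basis vector. -/
def dxCoeff (n : ℕ) (lam : ℕ → ℂ) (a k : ℕ) : ℂ :=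
  if a + 2 ≤ n ∧ a + 1 ≤ k ∧ k + 2 ≤ n then (a + 1) * lam (k - a + 1) else 0

def cornerCoeff (n a k : ℕ) : ℂ :=
  (if a = 0 ∧ k = n - 1 then 1 else 0) - (if a = n - 1 ∧ k = n - 3 then 1 else 0)

/-- The inner derivation `{Pi.single 0 1, -}`. -/
def topCoeff (n a k : ℕ) : ℂ :=
  if a = n - 1 ∧ k = n - 2 then 1 else 0

theorem mulRel_dxCoeff (lam : ℕ → ℂ) (a b k : ℕ) : MulRel n (dxCoeff n lam) a b k := by
  unfold MulRel dxCoeff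
  split_ifs <;> first
    | omega
    | (rw [show k - b - 1 - a + 1 = k - (a + b + 1) + 1 by omega,
        show k - a - 1 - b + 1 = k - (a + b + 1) + 1 by omega]; push_cast; ring)
    | simp

theorem brRel_dxCoeff (lam : ℕ → ℂ) (a b k : ℕ) : BrRel n (dxCoeff n lam) a b k := by
  unfold BrRel dxCoeff
  -- splitting one `if` at a time lets `omega` cut inconsistent branches early
  repeat' (first | omega | split)
  all_goals simp

theorem mulRel_cornerCoeff (hn : 3 < n) (a b k : ℕ) : MulRel n (cornerCoeff n) a b k := by
  unfold MulRel cornerCoeff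
  repeat' (first | omega | split)
  all_goals simp

theorem brRel_cornerCoeff (hn : 3 < n) (a b k : ℕ) : BrRel n (cornerCoeff n) a b k := by
  unfold BrRel cornerCoeff
  repeat' (first | omega | split)
  all_goals simp

theorem mulRel_topCoeff (hn : 3 < n) (a b k : ℕ) : MulRel n (topCoeff n) a b k := by
  unfold MulRel topCoeff
  repeat' (first | omega | split)
  all_goals simp

theorem brRel_topCoeff (a b k : ℕ) : BrRel n (topCoeff n) a b k := by
  unfold BrRel topCoeff
  repeat' (first | omega | split)
  all_goals simp

def solCoeff (n : ℕ) (lam : ℕ → ℂ) (μ : ℂ) : ℕ → ℕ → ℂ :=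
  dxCoeff n lam + lam n • cornerCoeff n + μ • topCoeff n

theorem mulRel_solCoeff (hn : 3 < n) (lam : ℕ → ℂ) (μ : ℂ) (a b k : ℕ) :
    MulRel n (solCoeff n lam μ) a b k :=
  ((mulRel_dxCoeff lam a b k).add ((mulRel_cornerCoeff hn a b k).smul _)).add
    ((mulRel_topCoeff hn a b k).smul _)

theorem brRel_solCoeff (hn : 3 < n) (lam : ℕ → ℂ) (μ : ℂ) (a b k : ℕ) :
    BrRel n (solCoeff n lam μ) a b k :=
  ((brRel_dxCoeff lam a b k).add ((brRel_cornerCoeff hn a b k).smul _)).add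
    ((brRel_topCoeff a b k).smul _)

section Rows

variable (lam : ℕ → ℂ) (μ : ℂ) {a k : ℕ}

theorem solCoeff_zero (hn : 3 < n) (hk : k < n) :
    solCoeff n lam μ 0 k = if 1 ≤ k then lam (k + 1) else 0 := by
  simp only [solCoeff, Pi.add_apply, Pi.smul_apply, smul_eq_mul, dxCoeff, cornerCoeff, topCoeff,
    true_and]
  split_ifs <;> first | omega | (rw [show k + 1 = n by omega]; ring) | simp

theorem solCoeff_mid (ha₁ : 1 ≤ a) (ha₂ : a ≤ n - 2) :
    solCoeff n lam μ a k =
      ((a + 1 : ℕ) : ℂ) * if a + 1 ≤ k ∧ k ≤ n - 2 then lam (k - a + 1) else 0 := by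
  simp only [solCoeff, Pi.add_apply, Pi.smul_apply, smul_eq_mul, dxCoeff, cornerCoeff, topCoeff]
  split_ifs <;> first | omega | (push_cast; ring)

theorem solCoeff_last (hn : 3 < n) :
    solCoeff n lam μ (n - 1) k =
      (if k = n - 3 then -lam n else 0) + if k = n - 2 then μ else 0 := by
  simp only [solCoeff, Pi.add_apply, Pi.smul_apply, smul_eq_mul, dxCoeff, cornerCoeff, topCoeff,
    true_and]
  split_ifs <;> first | omega | ring

theorem solCoeff_of_not_lt (hn : 0 < n) (h : ¬(a < n ∧ k < n)) :
    solCoeff n lam μ a k = 0 := by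
  simp only [solCoeff, Pi.add_apply, Pi.smul_apply, smul_eq_mul, dxCoeff, cornerCoeff, topCoeff]
  split_ifs <;> first | omega | ring

end Rows

section Solve

variable {d : ℕ → ℕ → ℂ} (hM : ∀ a b k, a < n → b < n → k < n → MulRel n d a b k)
  (hB : ∀ a b k, a < n → b < n → k < n → BrRel n d a b k)
include hM

theorem entry_succ_row {b k : ℕ} (hb : b + 3 ≤ n) (hk : k < n) :
    d (b + 1) k = (if b + 1 ≤ k ∧ k + 2 ≤ n then d 0 (k - b - 1) else 0) +
      (if 1 ≤ k ∧ k + 2 ≤ n then d b (k - 1) else 0) := by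
  have h := hM 0 b k (by omega) (by omega) hk
  simp (disch := omega) only [MulRel, if_pos, if_neg, zero_add, add_zero, Nat.sub_zero] at h
  exact h

theorem entry_mid_row {i k : ℕ} (hi : i + 2 ≤ n) (hk : k + 2 ≤ n) :
    d i k = (i + 1) * if i ≤ k then d 0 (k - i) else 0 := by
  induction i generalizing k with
  | zero => simp
  | succ i ih =>
    rw [entry_succ_row hM (by omega) (by omega)]
    rcases Nat.eq_zero_or_pos k with rfl | hk0
    · simp
    rw [ih (by omega) (by omega)]
    split_ifs <;> first
      | omega
      | (rw [show k - 1 - i = k - (i + 1) by omega, show k - i - 1 = k - (i + 1) by omega]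
         push_cast; ring)
      | simp

theorem entry_mid_row_last {i : ℕ} (hi₁ : 1 ≤ i) (hi₂ : i + 2 ≤ n) : d i (n - 1) = 0 := by
  obtain ⟨b, rfl⟩ : ∃ b, i = b + 1 := ⟨i - 1, by omega⟩
  rw [entry_succ_row hM (by omega) (by omega), if_neg (by omega), if_neg (by omega), add_zero]

theorem entry_last_row_low {j : ℕ} (hj : j + 4 ≤ n) : d (n - 1) j = 0 := by
  have h := hM 0 (n - 1) (j + 1) (by omega) (by omega) (by omega)
  simp (disch := omega) only [MulRel, if_pos, if_neg, zero_add, add_zero] at h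
  simpa using h.symm

theorem entry_last_row_antidiag (hn : 3 < n) : d (n - 1) (n - 3) = -d 0 (n - 1) := by
  have h := hM 0 (n - 1) (n - 2) (by omega) (by omega) (by omega)
  simp (disch := omega) only [MulRel, if_pos, if_neg, zero_add, add_zero, Nat.sub_zero] at h
  rw [show n - 2 - 1 = n - 3 by omega] at h
  linear_combination -h

include hB in
theorem entry_zero_zero (hn : 3 < n) : d 0 0 = 0 := by
  have hmul := hM (n - 1) (n - 1) (n - 2) (by omega) (by omega) (by omega)
  have hbr := hB 0 (n - 1) (n - 2) (by omega) (by omega) (by omega)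
  have hmid := entry_mid_row hM (i := n - 2) (k := n - 2) (by omega) (by omega)
  simp (disch := omega) only [MulRel, BrRel, if_pos, if_neg, true_and] at hmul hbr
  rw [if_pos le_rfl, Nat.sub_self] at hmid
  -- `d (n-2) (n-2)` is `(n - 1) d 0 0` by `hmid` and `2 d 0 0` by `hmul` and `hbr`
  have hcast : ((n - 2 : ℕ) : ℂ) = (n - 3 : ℕ) + 1 := by norm_cast; omega
  have hne : ((n - 3 : ℕ) : ℂ) ≠ 0 := by exact_mod_cast (by omega : n - 3 ≠ 0)
  refine (mul_eq_zero.1 ?_).resolve_left hne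
  linear_combination 2 * hbr - hmul - hmid - d 0 0 * hcast

include hB in
theorem entry_last_last (hn : 3 < n) : d (n - 1) (n - 1) = 0 := by
  have hmul := hM (n - 1) (n - 1) (n - 2) (by omega) (by omega) (by omega)
  have hbr := hB 0 (n - 1) (n - 2) (by omega) (by omega) (by omega)
  simp (disch := omega) only [MulRel, BrRel, if_pos, if_neg, true_and] at hmul hbr
  linear_combination hbr - hmul + entry_zero_zero hM hB hn

end Solve

theorem eq_solCoeff_of_mulRel_of_brRel (hn : 3 < n) {d : ℕ → ℕ → ℂ}
    (hM : ∀ a b k, a < n → b < n → k < n → MulRel n d a b k)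
    (hB : ∀ a b k, a < n → b < n → k < n → BrRel n d a b k) {a k : ℕ} (ha : a < n)
    (hk : k < n) : d a k = solCoeff n (fun j => d 0 (j - 1)) (d (n - 1) (n - 2)) a k := by
  rcases (by omega : a = 0 ∨ (1 ≤ a ∧ a ≤ n - 2) ∨ a = n - 1) with rfl | ha' | rfl
  · rw [solCoeff_zero _ _ hn hk]
    split_ifs with hk₁
    · rfl
    · rw [show k = 0 by omega, entry_zero_zero hM hB hn]
  · rw [solCoeff_mid _ _ ha'.1 ha'.2]
    rcases (by omega : k ≤ n - 2 ∨ k = n - 1) with hk' | rfl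
    · rw [entry_mid_row hM (by omega) (by omega)]
      split_ifs <;> first
        | omega
        | (rw [show k = a by omega, Nat.sub_self, entry_zero_zero hM hB hn]; simp)
        | (rw [show k - a + 1 - 1 = k - a by omega]; push_cast; ring)
        | simp
    · rw [entry_mid_row_last hM ha'.1 (by omega), if_neg (by omega), mul_zero]
  · rw [solCoeff_last _ _ hn]
    rcases (by omega : k + 4 ≤ n ∨ k = n - 3 ∨ k = n - 2 ∨ k = n - 1)
      with hk' | rfl | rfl | rfl
    · rw [entry_last_row_low hM hk', if_neg (by omega), if_neg (by omega), add_zero]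
    · rw [entry_last_row_antidiag hM hn, if_pos rfl, if_neg (by omega), add_zero,
        show n - 1 = n - 1 + 1 - 1 by omega]
    · rw [if_neg (by omega), if_pos rfl, zero_add]
    · rw [entry_last_last hM hB hn, if_neg (by omega), if_neg (by omega), add_zero]

theorem coeff_eq_solCoeff_of_isDerivation (hn : 3 < n) {φ : (Fin n → ℂ) →ₗ[ℂ] (Fin n → ℂ)}
    (h₁ : IsDerivationOf (mu12 n) φ) (h₂ : IsDerivationOf (brB n) φ) :
    coeff φ = solCoeff n (fun j => coeff φ 0 (j - 1)) (coeff φ (n - 1) (n - 2)) := by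
  have hM := (isDerivationOf_mu12_iff (by omega) φ).1 h₁
  have hB := (isDerivationOf_brB_iff (by omega) φ).1 h₂
  funext a k
  by_cases hak : a < n ∧ k < n
  · exact eq_solCoeff_of_mulRel_of_brRel hn
      (fun a b k ha hb hk => hM ⟨a, ha⟩ ⟨b, hb⟩ ⟨k, hk⟩)
      (fun a b k ha hb hk => hB ⟨a, ha⟩ ⟨b, hb⟩ ⟨k, hk⟩) hak.1 hak.2
  · rw [solCoeff_of_not_lt _ _ (by omega) hak, coeff, dif_neg hak]

theorem isDerivation_iff (hn : 3 < n) (φ : (Fin n → ℂ) →ₗ[ℂ] (Fin n → ℂ)) :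
    IsDerivationOf (mu12 n) φ ∧ IsDerivationOf (brB n) φ ↔
      ∃ lam μ, coeff φ = solCoeff n lam μ := by
  refine ⟨fun h => ⟨_, _, coeff_eq_solCoeff_of_isDerivation hn h.1 h.2⟩, ?_⟩
  rintro ⟨lam, μ, h⟩
  rw [isDerivationOf_mu12_iff (by omega), isDerivationOf_brB_iff (by omega), h]
  exact ⟨fun a b k => mulRel_solCoeff hn lam μ a b k,
    fun a b k => brRel_solCoeff hn lam μ a b k⟩

/-- `μ` is stored in the slot of the entry `d 0 0`, which vanishes on derivations. -/
def params (n : ℕ) : derivs (mu12 n) (brB n) →ₗ[ℂ] (Fin n → ℂ) where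
  toFun φ j := if (j : ℕ) = 0 then coeff φ.1 (n - 1) (n - 2) else coeff φ.1 0 j
  map_add' φ ψ := by
    funext j
    simp only [Submodule.coe_add, coeff_add, Pi.add_apply]
    split_ifs <;> rfl
  map_smul' c φ := by
    funext j
    simp only [Submodule.coe_smul, coeff_smul, Pi.smul_apply, RingHom.id_apply]
    split_ifs <;> rfl

theorem params_injective (hn : 3 < n) : Function.Injective (params n) := by
  refine (injective_iff_map_eq_zero _).2 fun φ hφ => ?_
  obtain ⟨h₁, h₂⟩ := φ.2
  have hsol := coeff_eq_solCoeff_of_isDerivation hn h₁ h₂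
  have hparam (j : Fin n) := congrFun hφ j
  simp only [params, LinearMap.coe_mk, AddHom.coe_mk, Pi.zero_apply] at hparam
  have hrow (j : ℕ) : coeff φ.1 0 j = 0 := by
    rcases (by omega : j = 0 ∨ (1 ≤ j ∧ j < n) ∨ n ≤ j) with rfl | hj | hj
    · rw [hsol, solCoeff_zero _ _ hn (by omega), if_neg (by omega)]
    · simpa [show j ≠ 0 by omega] using hparam ⟨j, hj.2⟩
    · rw [coeff, dif_neg (by omega)]
  have hμ : coeff φ.1 (n - 1) (n - 2) = 0 := by simpa using hparam ⟨0, by omega⟩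
  have hzero : coeff φ.1 = 0 := by
    rw [hsol, hμ]
    funext a k
    simp [hrow, solCoeff, dxCoeff]
  refine Subtype.ext ((Pi.basisFun ℂ (Fin n)).ext fun a => funext fun k => ?_)
  simpa using congrFun₂ hzero a k

theorem params_surjective (hn : 3 < n) : Function.Surjective (params n) := by
  intro v
  let lam : ℕ → ℂ := fun j => if h : j - 1 < n then v ⟨j - 1, h⟩ else 0
  let μ := v ⟨0, by omega⟩
  let φ : (Fin n → ℂ) →ₗ[ℂ] (Fin n → ℂ) :=
    Matrix.toLin' (.of fun k a => solCoeff n lam μ a k)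
  have hφ : coeff φ = solCoeff n lam μ :=
    (coeff_eq_iff fun _ _ => solCoeff_of_not_lt lam μ (by omega)).2 fun a k => by simp [φ]
  refine ⟨⟨φ, (isDerivation_iff hn φ).2 ⟨lam, μ, hφ⟩⟩, funext fun j => ?_⟩
  simp only [params, LinearMap.coe_mk, AddHom.coe_mk, hφ]
  split_ifs with hj
  · rw [solCoeff_last _ _ hn, if_neg (by omega), if_pos rfl, zero_add]
    exact congrArg v (Fin.ext hj.symm)
  · rw [solCoeff_zero _ _ hn j.isLt, if_pos (by omega)]
    simp [lam]

theorem forall_apply_single_eq_solCoeff_iff (hn : 3 < n)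
    (φ : (Fin n → ℂ) →ₗ[ℂ] (Fin n → ℂ)) (lam : ℕ → ℂ) (μ : ℂ) :
    (∀ a k : Fin n, φ (Pi.single a 1) k = solCoeff n lam μ a k) ↔
      φ (Pi.single (⟨0, (by omega : n > 0)⟩ : Fin n) 1) =
          ∑ k : Fin n, (if 1 ≤ (k : ℕ) then lam ((k : ℕ) + 1) else 0) •
            (Pi.single k (1 : ℂ) : Fin n → ℂ) ∧
        (∀ a : Fin n, 1 ≤ (a : ℕ) → (a : ℕ) ≤ n - 2 →
          φ (Pi.single a 1) = (((a : ℕ) + 1 : ℕ) : ℂ) •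
            ∑ k : Fin n,
              (if (a : ℕ) + 1 ≤ (k : ℕ) ∧ (k : ℕ) ≤ n - 2 then
                  lam ((k : ℕ) - (a : ℕ) + 1) else 0) •
                (Pi.single k (1 : ℂ) : Fin n → ℂ)) ∧
        φ (Pi.single (⟨n - 1, (by omega : n > n - 1)⟩ : Fin n) 1) =
          (- lam n) •
            (Pi.single (⟨n - 3, (by omega : n > n - 3)⟩ : Fin n) (1 : ℂ) : Fin n → ℂ) +
          μ • (Pi.single (⟨n - 2, (by omega : n > n - 2)⟩ : Fin n) (1 : ℂ) : Fin n → ℂ) := by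
  simp only [← pi_eq_sum_univ', funext_iff, Pi.smul_apply, Pi.add_apply, smul_eq_mul,
    Pi.single_apply, Fin.ext_iff]
  constructor
  · intro h
    refine ⟨fun k => ?_, fun a ha₁ ha₂ k => ?_, fun k => ?_⟩
    · rw [h, solCoeff_zero _ _ hn k.isLt]
    · rw [h, solCoeff_mid _ _ ha₁ ha₂]
    · rw [h, solCoeff_last _ _ hn]
      split_ifs <;> first | omega | ring
  · rintro ⟨h₀, hmid, hlast⟩ a k
    rcases (by omega : (a : ℕ) = 0 ∨ (1 ≤ (a : ℕ) ∧ (a : ℕ) ≤ n - 2) ∨ (a : ℕ) = n - 1)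
      with ha | ha | ha
    · rw [show a = ⟨0, by omega⟩ from Fin.ext ha, h₀, solCoeff_zero _ _ hn k.isLt]
    · rw [hmid a ha.1 ha.2, solCoeff_mid _ _ ha.1 ha.2]
    · rw [show a = ⟨n - 1, by omega⟩ from Fin.ext ha, hlast, solCoeff_last _ _ hn]
      split_ifs <;> first | omega | ring

end P15

/-- For n > 3, the derivations of `P₁,₅ⁿ` form a Lie algebra of dimension `n`,
and `φ` is a derivation iff there are `λ₂,…,λₙ, μ ∈ ℂ` with
`φ(e₁) = ∑_{k=2}^{n} λ_k e_k`, `φ(e_i) = i ∑_{k=i+1}^{n−1} λ_{k−i+1} e_k`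
for `2 ≤ i ≤ n−1`, and `φ(eₙ) = −λₙ e_{n−2} + μ e_{n−1}`. -/
theorem stmt14 (n : ℕ) (hn : 3 < n) :
    Module.finrank ℂ ↥(derivs (mu12 n) (brB n)) = n ∧
    ∀ φ : (Fin n → ℂ) →ₗ[ℂ] (Fin n → ℂ),
      ((∀ x y, φ (mu12 n x y) = mu12 n (φ x) y + mu12 n x (φ y)) ∧
       (∀ x y, φ (brB n x y) = brB n (φ x) y + brB n x (φ y))) ↔
      ∃ (lam : ℕ → ℂ) (μ : ℂ),
        φ (Pi.single (⟨0, by omega⟩ : Fin n) 1) =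
          ∑ k : Fin n, (if 1 ≤ (k : ℕ) then lam ((k : ℕ) + 1) else 0) •
            (Pi.single k (1 : ℂ) : Fin n → ℂ) ∧
        (∀ a : Fin n, 1 ≤ (a : ℕ) → (a : ℕ) ≤ n - 2 →
          φ (Pi.single a 1) = (((a : ℕ) + 1 : ℕ) : ℂ) •
            ∑ k : Fin n,
              (if (a : ℕ) + 1 ≤ (k : ℕ) ∧ (k : ℕ) ≤ n - 2 then
                  lam ((k : ℕ) - (a : ℕ) + 1) else 0) •
                (Pi.single k (1 : ℂ) : Fin n → ℂ)) ∧
        φ (Pi.single (⟨n - 1, by omega⟩ : Fin n) 1) =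
          (- lam n) • (Pi.single (⟨n - 3, by omega⟩ : Fin n) (1 : ℂ) : Fin n → ℂ) +
          μ • (Pi.single (⟨n - 2, by omega⟩ : Fin n) (1 : ℂ) : Fin n → ℂ) := by
  refine ⟨?_, fun φ => (P15.isDerivation_iff hn φ).trans (exists₂_congr fun lam μ => ?_)⟩
  · rw [(LinearEquiv.ofBijective (P15.params n)
      ⟨P15.params_injective hn, P15.params_surjective hn⟩).finrank_eq, Module.finrank_fin_fun]
  · rw [P15.coeff_eq_iff fun _ _ => P15.solCoeff_of_not_lt lam μ (by omega)]
    exact P15.forall_apply_single_eq_solCoeff_iff hn φ lam μ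
end

section
/- Let n > 3. The Poisson algebra P₁,₂ⁿ degenerates to the Poisson algebra P₁,₃ⁿ: there exists a family g(t), t ∈ ℂ∖{0}, of invertible linear maps of ℂⁿ such that for all x, y ∈ ℂⁿ, g(t)(μ(g(t)⁻¹x, g(t)⁻¹y)) → λ(x,y) and g(t)(μ'(g(t)⁻¹x, g(t)⁻¹y)) → λ'(x,y) as t → 0 (in the standard topology of ℂⁿ), where (μ, μ') are the multiplication and bracket of P₁,₂ⁿ and (λ, λ') those of P₁,₃ⁿ. -/
open scoped BigOperators

/-- Multiplication of `P₁,₂ⁿ` and `P₁,₃ⁿ`: `e_i · e_j = e_{i+j}` for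
`2 ≤ i+j ≤ n−1`, `i,j ≤ n−1`; all other products of basis vectors are zero. -/
noncomputable def mu11 (n : ℕ) : (Fin n → ℂ) →ₗ[ℂ] (Fin n → ℂ) →ₗ[ℂ] (Fin n → ℂ) :=
  sb (fun a b k => if (a : ℕ) + (b : ℕ) + 1 = (k : ℕ) ∧ (k : ℕ) + 2 ≤ n then 1 else 0)

/-- The bracket of `P₁,₂ⁿ`: `{e₁,eₙ} = eₙ`. -/
noncomputable def brA (n : ℕ) : (Fin n → ℂ) →ₗ[ℂ] (Fin n → ℂ) →ₗ[ℂ] (Fin n → ℂ) :=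
  sb (fun a b k =>
    if (a : ℕ) = 0 ∧ (b : ℕ) + 1 = n ∧ (k : ℕ) + 1 = n then 1
    else if (a : ℕ) + 1 = n ∧ (b : ℕ) = 0 ∧ (k : ℕ) + 1 = n then -1 else 0)

lemma sb_apply {n : ℕ} (c : Fin n → Fin n → Fin n → ℂ) (x y : Fin n → ℂ) (k : Fin n) :
    sb c x y k = ∑ a, ∑ b, c a b k * (x a * y b) := rfl

section Aux
variable (n : ℕ) (hn : 3 < n) (t : ℂ)

/-- forward map -/
noncomputable def gfun (x : Fin n → ℂ) : Fin n → ℂ := fun k =>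
  if (k : ℕ) + 1 = n then t * x k
  else if (k : ℕ) + 2 = n then (t ^ ((k : ℕ) + 1))⁻¹ * x k + x ⟨n - 1, by omega⟩
  else (t ^ ((k : ℕ) + 1))⁻¹ * x k

/-- inverse map -/
noncomputable def ginvfun (x : Fin n → ℂ) : Fin n → ℂ := fun k =>
  if (k : ℕ) + 1 = n then t⁻¹ * x k
  else if (k : ℕ) + 2 = n then
    t ^ ((k : ℕ) + 1) * x k - t ^ ((k : ℕ) + 1) * t⁻¹ * x ⟨n - 1, by omega⟩
  else t ^ ((k : ℕ) + 1) * x k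

noncomputable def glin : (Fin n → ℂ) →ₗ[ℂ] (Fin n → ℂ) where
  toFun := gfun n hn t
  map_add' x y := by funext k; simp only [gfun, Pi.add_apply]; split_ifs <;> ring
  map_smul' r x := by
    funext k; simp only [gfun, Pi.smul_apply, smul_eq_mul, RingHom.id_apply]
    split_ifs <;> ring

noncomputable def ginvlin : (Fin n → ℂ) →ₗ[ℂ] (Fin n → ℂ) where
  toFun := ginvfun n hn t
  map_add' x y := by funext k; simp only [ginvfun, Pi.add_apply]; split_ifs <;> ring
  map_smul' r x := by
    funext k; simp only [ginvfun, Pi.smul_apply, smul_eq_mul, RingHom.id_apply]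
    split_ifs <;> ring

lemma ginvfun_last (x : Fin n → ℂ) :
    ginvfun n hn t x ⟨n - 1, by omega⟩ = t⁻¹ * x ⟨n - 1, by omega⟩ := by
  simp only [ginvfun]
  rw [if_pos (show ((⟨n - 1, by omega⟩ : Fin n) : ℕ) + 1 = n by
    show n - 1 + 1 = n; omega)]

lemma gfun_last (x : Fin n → ℂ) :
    gfun n hn t x ⟨n - 1, by omega⟩ = t * x ⟨n - 1, by omega⟩ := by
  simp only [gfun]
  rw [if_pos (show ((⟨n - 1, by omega⟩ : Fin n) : ℕ) + 1 = n by
    show n - 1 + 1 = n; omega)]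

lemma gfun_ginvfun (ht : t ≠ 0) (x : Fin n → ℂ) : gfun n hn t (ginvfun n hn t x) = x := by
  have hpow : ∀ m : ℕ, t ^ m ≠ 0 := fun m => pow_ne_zero m ht
  funext k
  by_cases h1 : (k : ℕ) + 1 = n
  · have e1 : ginvfun n hn t x k = t⁻¹ * x k := by
      simp only [ginvfun]; rw [if_pos h1]
    simp only [gfun]; rw [if_pos h1, e1]; field_simp
  · by_cases h2 : (k : ℕ) + 2 = n
    · have e1 : ginvfun n hn t x k =
          t ^ ((k : ℕ) + 1) * x k - t ^ ((k : ℕ) + 1) * t⁻¹ * x ⟨n - 1, by omega⟩ := by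
        simp only [ginvfun]; rw [if_neg h1, if_pos h2]
      simp only [gfun]
      rw [if_neg h1, if_pos h2, e1, ginvfun_last n hn t x]
      field_simp
      ring
    · have e1 : ginvfun n hn t x k = t ^ ((k : ℕ) + 1) * x k := by
        simp only [ginvfun]; rw [if_neg h1, if_neg h2]
      simp only [gfun]; rw [if_neg h1, if_neg h2, e1]; field_simp

lemma ginvfun_gfun (ht : t ≠ 0) (x : Fin n → ℂ) : ginvfun n hn t (gfun n hn t x) = x := by
  have hpow : ∀ m : ℕ, t ^ m ≠ 0 := fun m => pow_ne_zero m ht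
  funext k
  by_cases h1 : (k : ℕ) + 1 = n
  · have e1 : gfun n hn t x k = t * x k := by
      simp only [gfun]; rw [if_pos h1]
    simp only [ginvfun]; rw [if_pos h1, e1]; field_simp
  · by_cases h2 : (k : ℕ) + 2 = n
    · have e1 : gfun n hn t x k =
          (t ^ ((k : ℕ) + 1))⁻¹ * x k + x ⟨n - 1, by omega⟩ := by
        simp only [gfun]; rw [if_neg h1, if_pos h2]
      simp only [ginvfun]
      rw [if_neg h1, if_pos h2, e1, gfun_last n hn t x]
      field_simp
      ring
    · have e1 : gfun n hn t x k = (t ^ ((k : ℕ) + 1))⁻¹ * x k := by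
        simp only [gfun]; rw [if_neg h1, if_neg h2]
      simp only [ginvfun]; rw [if_neg h1, if_neg h2, e1]; field_simp

noncomputable def gmap (ht : t ≠ 0) : (Fin n → ℂ) ≃ₗ[ℂ] (Fin n → ℂ) :=
  LinearEquiv.ofLinear (glin n hn t) (ginvlin n hn t)
    (LinearMap.ext fun x => by
      simpa [glin, ginvlin, LinearMap.comp_apply] using gfun_ginvfun n hn t ht x)
    (LinearMap.ext fun x => by
      simpa [glin, ginvlin, LinearMap.comp_apply] using ginvfun_gfun n hn t ht x)

lemma gmap_apply (ht : t ≠ 0) (x : Fin n → ℂ) : gmap n hn t ht x = gfun n hn t x := rfl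

lemma gmap_symm_apply (ht : t ≠ 0) (x : Fin n → ℂ) :
    (gmap n hn t ht).symm x = ginvfun n hn t x := rfl

end Aux

section Key
variable (n : ℕ) (hn : 3 < n) (t : ℂ) (x y : Fin n → ℂ)

lemma mu11_zero (k : Fin n) (hk : ¬ ((k : ℕ) + 2 ≤ n)) : mu11 n x y k = 0 := by
  rw [mu11, sb_apply]
  refine Finset.sum_eq_zero fun a _ => Finset.sum_eq_zero fun b _ => ?_
  rw [if_neg (fun h => hk h.2), zero_mul]

lemma brA_zero (k : Fin n) (hk : (k : ℕ) + 1 ≠ n) : brA n x y k = 0 := by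
  rw [brA, sb_apply]
  refine Finset.sum_eq_zero fun a _ => Finset.sum_eq_zero fun b _ => ?_
  rw [if_neg (fun h => hk h.2.2), if_neg (fun h => hk h.2.2), zero_mul]

lemma brB_zero (k : Fin n) (hk : (k : ℕ) + 2 ≠ n) : brB n x y k = 0 := by
  rw [brB, sb_apply]
  refine Finset.sum_eq_zero fun a _ => Finset.sum_eq_zero fun b _ => ?_
  rw [if_neg (fun h => hk h.2.2), if_neg (fun h => hk h.2.2), zero_mul]

lemma brB_eq_brA_top (k : Fin n) (hk : (k : ℕ) + 2 = n) :
    brB n x y k = brA n x y ⟨n - 1, by omega⟩ := by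
  rw [brA, brB, sb_apply, sb_apply]
  refine Finset.sum_congr rfl fun a _ => Finset.sum_congr rfl fun b _ => ?_
  congr 1
  have hv : ((⟨n - 1, by omega⟩ : Fin n) : ℕ) = n - 1 := rfl
  split_ifs with h1 h2 h3 h4 <;> simp_all <;> omega

lemma mu11_scale (ht : t ≠ 0) :
    mu11 n (ginvfun n hn t x) (ginvfun n hn t y) =
      fun k : Fin n => t ^ ((k : ℕ) + 1) * mu11 n x y k := by
  funext k
  rw [mu11, sb_apply, sb_apply, Finset.mul_sum]
  refine Finset.sum_congr rfl fun a _ => ?_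
  rw [Finset.mul_sum]
  refine Finset.sum_congr rfl fun b _ => ?_
  by_cases h : (a : ℕ) + (b : ℕ) + 1 = (k : ℕ) ∧ (k : ℕ) + 2 ≤ n
  · rw [if_pos h, ginvfun, ginvfun]
    rw [if_neg (by omega), if_neg (by omega), if_neg (by omega), if_neg (by omega)]
    rw [show (k : ℕ) + 1 = ((a : ℕ) + 1) + ((b : ℕ) + 1) by omega, pow_add]
    ring
  · rw [if_neg h, zero_mul, zero_mul, mul_zero]

lemma brA_scale (ht : t ≠ 0) :
    brA n (ginvfun n hn t x) (ginvfun n hn t y) = brA n x y := by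
  funext k
  rw [brA, sb_apply, sb_apply]
  refine Finset.sum_congr rfl fun a _ => Finset.sum_congr rfl fun b _ => ?_
  by_cases h1 : (a : ℕ) = 0 ∧ (b : ℕ) + 1 = n ∧ (k : ℕ) + 1 = n
  · rw [if_pos h1, ginvfun, ginvfun]
    rw [if_neg (by omega), if_neg (by omega), if_pos h1.2.1]
    simp only [h1.1, zero_add, pow_one]
    field_simp
  · rw [if_neg h1]
    by_cases h2 : (a : ℕ) + 1 = n ∧ (b : ℕ) = 0 ∧ (k : ℕ) + 1 = n
    · rw [if_pos h2, ginvfun, ginvfun]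
      rw [if_pos h2.1, if_neg (by omega), if_neg (by omega)]
      simp only [h2.2.1, zero_add, pow_one]
      field_simp
    · rw [if_neg h2, zero_mul, zero_mul]

lemma key_mu (ht : t ≠ 0) :
    gfun n hn t (mu11 n (ginvfun n hn t x) (ginvfun n hn t y)) = mu11 n x y := by
  have hpow : ∀ m : ℕ, t ^ m ≠ 0 := fun m => pow_ne_zero m ht
  rw [mu11_scale n hn t x y ht]
  funext k
  simp only [gfun]
  by_cases h1 : (k : ℕ) + 1 = n
  · rw [if_pos h1, mu11_zero n x y k (by omega), mul_zero, mul_zero]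
  · rw [if_neg h1]
    by_cases h2 : (k : ℕ) + 2 = n
    · rw [if_pos h2, mu11_zero n x y ⟨n - 1, by omega⟩ (by simp; omega)]
      rw [mul_zero, add_zero, ← mul_assoc, inv_mul_cancel₀ (hpow _), one_mul]
    · rw [if_neg h2, ← mul_assoc, inv_mul_cancel₀ (hpow _), one_mul]

lemma key_br (ht : t ≠ 0) :
    gfun n hn t (brA n (ginvfun n hn t x) (ginvfun n hn t y)) =
      brB n x y + t • fun k : Fin n => if (k : ℕ) + 1 = n then brA n x y k else 0 := by
  have hpow : ∀ m : ℕ, t ^ m ≠ 0 := fun m => pow_ne_zero m ht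
  rw [brA_scale n hn t x y ht]
  funext k
  simp only [gfun, Pi.add_apply, Pi.smul_apply, smul_eq_mul]
  by_cases h1 : (k : ℕ) + 1 = n
  · rw [if_pos h1, if_pos h1, brB_zero n x y k (by omega), zero_add]
  · rw [if_neg h1, if_neg h1, mul_zero, add_zero]
    by_cases h2 : (k : ℕ) + 2 = n
    · rw [if_pos h2, brA_zero n x y k (by omega), mul_zero, zero_add,
        brB_eq_brA_top n hn x y k h2]
    · rw [if_neg h2, brA_zero n x y k (by omega), brB_zero n x y k h2, mul_zero]

end Key

/-- For n > 3, the Poisson algebra `P₁,₂ⁿ` degenerates to `P₁,₃ⁿ`. -/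
theorem stmt15 (n : ℕ) (hn : 3 < n) :
    ∃ g : ℂ → ((Fin n → ℂ) ≃ₗ[ℂ] (Fin n → ℂ)), ∀ x y : Fin n → ℂ,
      Filter.Tendsto (fun t : ℂ => g t (mu11 n ((g t).symm x) ((g t).symm y)))
        (nhdsWithin (0 : ℂ) {(0 : ℂ)}ᶜ) (nhds (mu11 n x y)) ∧
      Filter.Tendsto (fun t : ℂ => g t (brA n ((g t).symm x) ((g t).symm y)))
        (nhdsWithin (0 : ℂ) {(0 : ℂ)}ᶜ) (nhds (brB n x y)) := by
  refine ⟨fun t => if ht : t = 0 then LinearEquiv.refl ℂ _ else gmap n hn t ht,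
    fun x y => ⟨?_, ?_⟩⟩
  · refine Filter.Tendsto.congr' ?_ tendsto_const_nhds
    filter_upwards [self_mem_nhdsWithin] with t ht
    have ht' : t ≠ 0 := ht
    rw [dif_neg ht']
    exact (key_mu n hn t x y ht').symm
  · have hc : Filter.Tendsto
        (fun t : ℂ => brB n x y +
          t • fun k : Fin n => if (k : ℕ) + 1 = n then brA n x y k else 0)
        (nhdsWithin (0 : ℂ) {(0 : ℂ)}ᶜ) (nhds (brB n x y)) := by
      have : Filter.Tendsto
          (fun t : ℂ => brB n x y +
            t • fun k : Fin n => if (k : ℕ) + 1 = n then brA n x y k else 0)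
          (nhds (0 : ℂ))
          (nhds (brB n x y +
            (0 : ℂ) • fun k : Fin n => if (k : ℕ) + 1 = n then brA n x y k else 0)) :=
        (Filter.tendsto_id.smul_const _).const_add _
      simpa using this.mono_left nhdsWithin_le_nhds
    refine Filter.Tendsto.congr' ?_ hc
    filter_upwards [self_mem_nhdsWithin] with t ht
    have ht' : t ≠ 0 := ht
    rw [dif_neg ht']
    exact (key_br n hn t x y ht').symm
end
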